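/- arXiv:2308.05167 — 2 statements merged into one kernel-verified Lean document; each statement's English description precedes it below -/
import Mathlib

section
/- Theorem (linearly factoring weights, constant vertical weight: columns are Pólya frequency sequences). Under the linear factorization hypothesis on the weights, assume in addition that b n = γ for all n, where γ is a nonnegative polynomial. Then for every k ∈ ℕ the Toeplitz matrix 𝒯(c) of the k-th column sequence c n = M n k of the weighted lattice-path matrix M is totally positive. -/
open Finset

/-- A multivariate polynomial with real coefficients is *nonnegative* if all of
its coefficients are nonnegative. -/
def PolyNonneg {σ : Type*} (p : MvPolynomial σ ℝ) : Prop :=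
  ∀ m, 0 ≤ p.coeff m

/-- An `ℕ × ℕ` matrix with entries in `MvPolynomial σ ℝ` is *totally positive*
if every minor (taken along strictly increasing row and column indices) is a
nonnegative polynomial. -/
def TP {σ : Type*} (A : ℕ → ℕ → MvPolynomial σ ℝ) : Prop :=
  ∀ r : ℕ, 1 ≤ r → ∀ ρ κ : Fin r → ℕ, StrictMono ρ → StrictMono κ →
    PolyNonneg (Matrix.of fun i j : Fin r => A (ρ i) (κ j)).det

/-- The weighted lattice-path matrix `M`:
`M n 0 = ∏_{i=1}^n b i`, `M n k = 0` for `k ≥ 1` and `n < t`, and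
`M n k = Σ_{i=0}^{ℓ} (a n i) * M (n-t-i) (k-1) + (b n) * M (n-1) k`
for `n ≥ t`, `k ≥ 1`, where summands with a negative first index vanish. -/
def latticeM {R : Type*} [CommRing R] (t ℓ : ℕ) (a : ℕ → ℕ → R) (b : ℕ → R) :
    ℕ → ℕ → R
  | n, 0 => ∏ i ∈ Finset.Icc 1 n, b i
  | 0, k + 1 => if t = 0 then a 0 0 * latticeM t ℓ a b 0 k else 0
  | n + 1, k + 1 =>
      if n + 1 < t then 0
      else (∑ i ∈ Finset.range (ℓ + 1),
              if t + i ≤ n + 1 then a (n + 1) i * latticeM t ℓ a b (n + 1 - t - i) k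
              else 0)
        + b (n + 1) * latticeM t ℓ a b n (k + 1)
  termination_by n k => (k, n)

/-- The Toeplitz matrix of a sequence: `𝒯(c) i j = c (i - j)` for `i ≥ j`
and `0` otherwise. -/
def toeplitz {R : Type*} [CommRing R] (c : ℕ → R) : ℕ → ℕ → R :=
  fun i j => if j ≤ i then c (i - j) else 0

/-!
The generating function of the `k`-th column of `M` is `G · (X ^ t · Q · G) ^ k`, where
`G = ∑ γ ^ n X ^ n` and `Q = ∑ a n i X ^ i = ∏ j (β j + α j X)`. The Toeplitz matrix of a product
of power series is the product of their Toeplitz matrices, so by Cauchy–Binet the power series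
with totally positive Toeplitz matrix form a monoid. It remains to check the factors: minors of
the Toeplitz matrix of `β + α X` or of `G` are, after row operations in the case of `G`, matrices
whose nonzero entries lie on a monotone staircase, so they equal the nonnegative product of their
diagonal entries.
-/

open PowerSeries

def nonnegPolys (σ : Type*) : Subsemiring (MvPolynomial σ ℝ) where
  carrier := {p | PolyNonneg p}
  zero_mem' _ := by simp
  one_mem' m := by
    classical
    rw [MvPolynomial.coeff_one]
    split_ifs <;> norm_num
  add_mem' hp hq m := by
    rw [MvPolynomial.coeff_add]
    exact add_nonneg (hp m) (hq m)
  mul_mem' hp hq m := by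
    classical
    rw [MvPolynomial.coeff_mul]
    exact Finset.sum_nonneg fun x _ => mul_nonneg (hp _) (hq _)

@[simp] lemma mem_nonnegPolys {σ : Type*} {p : MvPolynomial σ ℝ} :
    p ∈ nonnegPolys σ ↔ PolyNonneg p :=
  Iff.rfl

namespace Matrix

variable {R : Type*} [CommRing R]

lemma det_eq_prod_diag_of_support_monotone {ι : Type*} [Fintype ι] [DecidableEq ι]
    [LinearOrder ι] (A : Matrix ι ι R)
    (h : ∀ i j i' j', A i j ≠ 0 → A i' j' ≠ 0 → i < i' → j ≤ j') :
    A.det = ∏ i, A i i := by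
  rw [det_apply, Finset.sum_eq_single 1 (fun π _ hπ => ?_) (by simp)]
  · simp
  obtain ⟨j, hj⟩ : ∃ j, A (π j) j = 0 := by
    by_contra! hA
    have hmono : StrictMono π := fun j j' hjj' =>
      (lt_or_gt_of_ne (π.injective.ne hjj'.ne)).resolve_right fun hlt =>
        (h _ _ _ _ (hA j') (hA j) hlt).not_gt hjj'
    exact hπ (Equiv.ext (congrFun ((hmono.range_inj strictMono_id).1 (by simp))))
  rw [Finset.prod_eq_zero (f := fun i => A (π i) i) (Finset.mem_univ j) hj, smul_zero]

lemma det_mul_eq_sum_prod_mul_det_submatrix {ι κ : Type*} [Fintype ι] [DecidableEq ι]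
    [Fintype κ] (C : Matrix ι κ R) (D : Matrix κ ι R) :
    (C * D).det = ∑ g : ι → κ, (∏ i, C i (g i)) * (D.submatrix g id).det := by
  have hrows : C * D = fun i => ∑ m, C i m • D m := by
    ext i j
    simp [mul_apply, Finset.sum_apply]
  change detRowAlternating (C * D) = _
  rw [hrows]
  refine (detRowAlternating.toMultilinearMap.map_sum fun i m => C i m • D m).trans
    (Finset.sum_congr rfl fun g _ => ?_)
  exact detRowAlternating.map_smul_univ (fun i => C i (g i)) (fun i => D (g i))

/-- The Cauchy–Binet formula. -/
theorem det_mul_eq_sum_strictMono {r N : ℕ} (C : Matrix (Fin r) (Fin N) R)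
    (D : Matrix (Fin N) (Fin r) R) :
    (C * D).det = ∑ u : Fin r → Fin N with StrictMono u,
      (C.submatrix id u).det * (D.submatrix u id).det := by
  classical
  set f : (Fin r → Fin N) → R := fun g => (∏ i, C i (g i)) * (D.submatrix g id).det
  have hinj : ∀ g, f g ≠ 0 → g.Injective := fun g hg => by
    by_contra hg'
    obtain ⟨i, j, hij, hne⟩ := Function.not_injective_iff.1 hg'
    exact hg (mul_eq_zero_of_right _ (det_zero_of_row_eq hne (by ext; simp [hij])))
  have hminor : ∀ u : Fin r → Fin N, (C.submatrix id u).det * (D.submatrix u id).det =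
      ∑ π : Equiv.Perm (Fin r), f (u ∘ π) := fun u => by
    rw [← det_transpose, det_apply', Finset.sum_mul]
    refine Finset.sum_congr rfl fun π _ => ?_
    change _ = (∏ i, C i (u (π i))) * (D.submatrix (u ∘ π) id).det
    rw [show D.submatrix (u ∘ π) id = (D.submatrix u id).submatrix π id from rfl, det_permute]
    simp only [transpose_apply, submatrix_apply, id]
    ring
  rw [det_mul_eq_sum_prod_mul_det_submatrix, ← Finset.sum_filter_of_ne (p := Function.Injective)
    fun g _ => hinj g, Finset.sum_congr rfl fun u _ => hminor u, ← Finset.sum_product']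
  symm
  refine Finset.sum_nbij (fun x => x.1 ∘ x.2) ?_ ?_ ?_ (fun _ _ => rfl)
  · simp only [Finset.mem_product, Finset.mem_filter, Finset.mem_univ, true_and, and_imp,
      Prod.forall]
    exact fun u π hu _ => hu.injective.comp π.injective
  · rintro ⟨u, π⟩ hu ⟨u', π'⟩ hu' heq
    simp only [Finset.coe_product, Finset.coe_filter, Set.mem_prod, Set.mem_ofPred_eq,
      Finset.mem_univ, true_and] at hu hu' heq
    have hrange : Set.range u = Set.range u' := by
      simpa only [Set.range_comp, EquivLike.range_eq_univ, Set.image_univ] using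
        congrArg Set.range heq
    obtain rfl := (hu.1.range_inj hu'.1).1 hrange
    exact Prod.ext rfl (Equiv.ext fun i => hu.1.injective (congrFun heq i))
  · intro g hg
    simp only [Finset.coe_filter, Finset.mem_univ, true_and, Set.mem_ofPred_eq] at hg
    refine ⟨(g ∘ Tuple.sort g, (Tuple.sort g)⁻¹), ?_, ?_⟩
    · simp only [Finset.coe_product, Finset.coe_filter, Set.mem_prod, Set.mem_ofPred_eq,
        Finset.mem_univ, true_and, Finset.coe_univ, Set.mem_univ, and_true]
      exact (Tuple.monotone_sort g).strictMono_of_injective (hg.comp (Tuple.sort g).injective)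
    · ext i
      simp

end Matrix

section PowerSeries

variable {R : Type*} [CommRing R]

def geometricSeries (γ : R) : R⟦X⟧ :=
  PowerSeries.mk (γ ^ ·)

@[simp] lemma coeff_geometricSeries (γ : R) (n : ℕ) : coeff n (geometricSeries γ) = γ ^ n :=
  coeff_mk _ _

lemma geometricSeries_mul (γ : R) (W : R⟦X⟧) :
    geometricSeries γ * W = W + C γ * (X * (geometricSeries γ * W)) := by
  have hG : geometricSeries γ = 1 + C γ * X * geometricSeries γ := by
    ext (_ | n)
    · simp
    · rw [map_add, mul_assoc, coeff_C_mul, coeff_succ_X_mul]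
      simp [pow_succ, mul_comm]
  calc geometricSeries γ * W = (1 + C γ * X * geometricSeries γ) * W := by rw [← hG]
    _ = _ := by ring

lemma coeff_zero_geometricSeries_mul (γ : R) (W : R⟦X⟧) :
    coeff 0 (geometricSeries γ * W) = coeff 0 W := by
  rw [geometricSeries_mul, map_add, coeff_C_mul, coeff_zero_X_mul, mul_zero, add_zero]

lemma coeff_succ_geometricSeries_mul (γ : R) (W : R⟦X⟧) (n : ℕ) :
    coeff (n + 1) (geometricSeries γ * W) =
      coeff (n + 1) W + γ * coeff n (geometricSeries γ * W) := by
  conv_lhs => rw [geometricSeries_mul]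
  rw [map_add, coeff_C_mul, coeff_succ_X_mul]

lemma coeff_prod_C_add_C_mul_X {ι : Type*} [Fintype ι] [DecidableEq ι] (α β : ι → R) (i : ℕ) :
    coeff i (∏ j, (C (β j) + C (α j) * X)) =
      ∑ S ∈ Finset.powersetCard i Finset.univ, (∏ j ∈ S, α j) * ∏ j ∈ Sᶜ, β j := by
  have hexpand : ∏ j, (C (β j) + C (α j) * X) =
      ∑ S ∈ Finset.univ.powerset, C ((∏ j ∈ S, α j) * ∏ j ∈ Sᶜ, β j) * X ^ S.card := by
    simp_rw [add_comm (C (β _))]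
    rw [Finset.prod_add]
    refine Finset.sum_congr rfl fun S _ => ?_
    rw [Finset.prod_mul_distrib, Finset.prod_const, ← Finset.compl_eq_univ_sdiff, map_mul,
      map_prod, map_prod]
    ring
  simp_rw [hexpand, map_sum, coeff_C_mul_X_pow, Finset.powersetCard_eq_filter, Finset.sum_filter,
    eq_comm (a := i)]

lemma coeff_mul_eq_sum_range {ℓ : ℕ} {Q : R⟦X⟧} (hQ : ∀ i, ℓ < i → coeff i Q = 0) (F : R⟦X⟧)
    (m : ℕ) :
    coeff m (Q * F) =
      ∑ i ∈ Finset.range (ℓ + 1), if i ≤ m then coeff i Q * coeff (m - i) F else 0 := by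
  rw [coeff_mul, Finset.Nat.sum_antidiagonal_eq_sum_range_succ fun i j => coeff i Q * coeff j F,
    ← Finset.sum_filter, ← Finset.sum_filter_of_ne (p := (· ≤ ℓ)) fun i _ h => by
      by_contra hi
      exact h (by rw [hQ i (not_le.1 hi), zero_mul])]
  congr 1
  ext i
  simp only [Finset.mem_filter, Finset.mem_range]
  omega

lemma sum_toeplitz_mul_toeplitz (F G : R⟦X⟧) {i N : ℕ} (hi : i < N) (j : ℕ) :
    ∑ m ∈ Finset.range N, toeplitz (coeff · F) i m * toeplitz (coeff · G) m j =
      toeplitz (coeff · (F * G)) i j := by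
  simp only [toeplitz]
  split_ifs with hji
  · rw [← Finset.sum_subset (s₁ := Finset.Ico j (i + 1))
      (fun m hm => by simp only [Finset.mem_Ico, Finset.mem_range] at hm ⊢; omega)
      (fun m _ hm => by
        simp only [Finset.mem_Ico, not_and_or, not_le, not_lt] at hm
        split_ifs <;> first | omega | simp),
      Finset.sum_Ico_eq_sum_range, mul_comm F G, coeff_mul,
      Finset.Nat.sum_antidiagonal_eq_sum_range_succ fun a b => coeff a G * coeff b F]
    refine Finset.sum_congr (by congr 1; omega) fun k hk => ?_
    rw [Finset.mem_range] at hk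
    rw [if_pos (by omega), if_pos (by omega), show i - (j + k) = i - j - k by omega,
      Nat.add_sub_cancel_left, mul_comm]
  · exact Finset.sum_eq_zero fun m _ => by split_ifs <;> first | omega | simp

end PowerSeries

theorem latticeM_eq_coeff {R : Type*} [CommRing R] {t ℓ : ℕ} {a : ℕ → ℕ → R} {b : ℕ → R}
    {γ : R} (hb : ∀ n, b n = γ) {Q : R⟦X⟧} (ha : ∀ n i, i ≤ ℓ → a n i = coeff i Q)
    (hQ : ∀ i, ℓ < i → coeff i Q = 0) (n k : ℕ) :
    latticeM t ℓ a b n k =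
      coeff n (geometricSeries γ * (X ^ t * Q * geometricSeries γ) ^ k) := by
  induction k generalizing n with
  | zero =>
    rw [latticeM, pow_zero, mul_one, coeff_geometricSeries, Finset.prod_congr rfl fun i _ => hb i,
      Finset.prod_const, Nat.card_Icc, Nat.add_sub_cancel]
  | succ k ih =>
    set F := geometricSeries γ * (X ^ t * Q * geometricSeries γ) ^ k
    have hF : geometricSeries γ * (X ^ t * Q * geometricSeries γ) ^ (k + 1) =
        geometricSeries γ * (X ^ t * (Q * F)) := by
      simp only [F]
      ring
    rw [hF]
    induction n with
    | zero =>
      rw [latticeM, coeff_zero_geometricSeries_mul, coeff_X_pow_mul']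
      split_ifs with ht ht' ht'
      · rw [ha 0 0 ℓ.zero_le, ih, ht, Nat.sub_zero]
        simp only [coeff_zero_eq_constantCoeff_apply, map_mul]
      · omega
      · omega
      · rfl
    | succ n ihn =>
      rw [latticeM]
      split_ifs with hnt
      · rw [show geometricSeries γ * (X ^ t * (Q * F)) = X ^ t * (geometricSeries γ * Q * F) by
          ring, coeff_X_pow_mul', if_neg (by omega)]
      · rw [coeff_succ_geometricSeries_mul, ← ihn, hb, coeff_X_pow_mul', if_pos (by omega),
          coeff_mul_eq_sum_range hQ]
        congr 1
        refine Finset.sum_congr rfl fun i hi => ?_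
        rw [Finset.mem_range] at hi
        by_cases hti : t + i ≤ n + 1
        · rw [if_pos hti, if_pos (by omega), ha _ _ (by omega), ih, Nat.sub_sub]
        · rw [if_neg hti, if_neg (by omega)]

lemma ite_pow_sub_eq_add {R : Type*} [Semiring R] (γ : R) {x y : ℕ} (hxy : x ≤ y) (z : ℕ) :
    (if z ≤ y then γ ^ (y - z) else 0) =
      (if z ≤ y ∧ x < z then γ ^ (y - z) else 0) +
        γ ^ (y - x) * (if z ≤ x then γ ^ (x - z) else 0) := by
  by_cases hzx : z ≤ x
  · rw [if_pos (hzx.trans hxy), if_neg (by omega), if_pos hzx, ← pow_add, zero_add]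
    congr 1
    omega
  · by_cases hzy : z ≤ y
    · rw [if_pos hzy, if_pos ⟨hzy, by omega⟩, if_neg hzx, mul_zero, add_zero]
    · rw [if_neg hzy, if_neg fun h => hzy h.1, if_neg hzx, mul_zero, add_zero]

section PolyaFrequency

variable {σ : Type*}

def IsPolyaFrequency (F : (MvPolynomial σ ℝ)⟦X⟧) : Prop :=
  TP (toeplitz (coeff · F))

theorem IsPolyaFrequency.mul {F G : (MvPolynomial σ ℝ)⟦X⟧} (hF : IsPolyaFrequency F)
    (hG : IsPolyaFrequency G) : IsPolyaFrequency (F * G) := by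
  intro r hr ρ κ hρ hκ
  set N := Finset.univ.sup ρ + 1
  have hρN : ∀ p, ρ p < N := fun p => Nat.lt_succ_of_le (Finset.le_sup (Finset.mem_univ p))
  have hfactor : Matrix.of (fun p q => toeplitz (coeff · (F * G)) (ρ p) (κ q)) =
      Matrix.of (fun p (m : Fin N) => toeplitz (coeff · F) (ρ p) m) *
        Matrix.of (fun (m : Fin N) q => toeplitz (coeff · G) m (κ q)) := by
    refine Matrix.ext fun p q => ?_
    simp only [Matrix.mul_apply, Matrix.of_apply]
    rw [Fin.sum_univ_eq_sum_range
      (fun m => toeplitz (coeff · F) (ρ p) m * toeplitz (coeff · G) m (κ q)) N]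
    exact (sum_toeplitz_mul_toeplitz F G (hρN p) (κ q)).symm
  rw [hfactor, Matrix.det_mul_eq_sum_strictMono, ← mem_nonnegPolys]
  refine Subsemiring.sum_mem _ fun u hu => Subsemiring.mul_mem _ ?_ ?_
  · exact hF r hr ρ _ hρ (Fin.val_strictMono.comp (Finset.mem_filter.1 hu).2)
  · exact hG r hr _ κ (Fin.val_strictMono.comp (Finset.mem_filter.1 hu).2) hκ

lemma isPolyaFrequency_C_add_C_mul_X {a b : MvPolynomial σ ℝ} (ha : PolyNonneg a)
    (hb : PolyNonneg b) : IsPolyaFrequency (C b + C a * X) := by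
  have hentry : ∀ i j, toeplitz (coeff · (C b + C a * X)) i j =
      if i = j then b else if i = j + 1 then a else 0 := fun i j => by
    simp only [toeplitz, map_add, coeff_C, coeff_C_mul, coeff_X]
    split_ifs <;> first | omega | simp
  intro r hr ρ κ hρ hκ
  simp only [hentry]
  rw [Matrix.det_eq_prod_diag_of_support_monotone, ← mem_nonnegPolys]
  · refine Subsemiring.prod_mem _ fun p _ => ?_
    simp only [Matrix.of_apply]
    split_ifs <;> simp_all
  · intro p q p' q' h h' hpp'
    simp only [Matrix.of_apply] at h h'
    have := hρ hpp'
    by_contra! hqq'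
    have := hκ hqq'
    split_ifs at h h' <;> first | omega | simp_all

lemma isPolyaFrequency_geometricSeries {γ : MvPolynomial σ ℝ} (hγ : PolyNonneg γ) :
    IsPolyaFrequency (geometricSeries γ) := by
  intro r hr ρ κ hρ hκ
  obtain ⟨r, rfl⟩ : ∃ r', r = r' + 1 := ⟨r - 1, by omega⟩
  simp only [toeplitz, coeff_geometricSeries]
  -- subtracting `γ ^ (ρ (p + 1) - ρ p)` times row `p` from row `p + 1` keeps, in each column `q`,
  -- only the entry in the first row `p` with `κ q ≤ ρ p`
  let B : Matrix (Fin (r + 1)) (Fin (r + 1)) (MvPolynomial σ ℝ) := .of fun p q =>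
    if κ q ≤ ρ p ∧ ∀ p' < p, ρ p' < κ q then γ ^ (ρ p - κ q) else 0
  rw [Matrix.det_eq_of_forall_row_eq_smul_add_pred (B := B)
      (fun i => γ ^ (ρ i.succ - ρ i.castSucc)) ?zero ?succ,
    Matrix.det_eq_prod_diag_of_support_monotone B ?support, ← mem_nonnegPolys]
  · refine Subsemiring.prod_mem _ fun p _ => ?_
    simp only [B, Matrix.of_apply]
    split_ifs
    exacts [pow_mem hγ _, zero_mem _]
  case zero => simp [B]
  case succ =>
    intro i q
    have hfirst : (∀ p' < i.succ, ρ p' < κ q) ↔ ρ i.castSucc < κ q :=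
      ⟨fun h => h _ i.castSucc_lt_succ,
        fun h p' hp' => (hρ.monotone (Fin.le_castSucc_iff.2 hp')).trans_lt h⟩
    simp only [B, Matrix.of_apply, hfirst]
    exact ite_pow_sub_eq_add γ (hρ i.castSucc_lt_succ).le (κ q)
  case support =>
    intro p q p' q' h h' hpp'
    simp only [B, Matrix.of_apply] at h h'
    obtain ⟨hq, -⟩ : κ q ≤ ρ p ∧ ∀ p'' < p, ρ p'' < κ q := by
      by_contra hc
      exact h (if_neg hc)
    obtain ⟨-, hq'⟩ : κ q' ≤ ρ p' ∧ ∀ p'' < p', ρ p'' < κ q' := by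
      by_contra hc
      exact h' (if_neg hc)
    by_contra! hqq'
    have := hκ hqq'
    have := hq' p hpp'
    omega

variable (σ) in
def polyaFrequencySeries : Submonoid (MvPolynomial σ ℝ)⟦X⟧ where
  carrier := {F | IsPolyaFrequency F}
  one_mem' := by
    simpa using isPolyaFrequency_C_add_C_mul_X (σ := σ) (nonnegPolys σ).zero_mem
      (nonnegPolys σ).one_mem
  mul_mem' := IsPolyaFrequency.mul

@[simp] lemma mem_polyaFrequencySeries {F : (MvPolynomial σ ℝ)⟦X⟧} :
    F ∈ polyaFrequencySeries σ ↔ IsPolyaFrequency F :=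
  Iff.rfl

lemma X_mem_polyaFrequencySeries : (X : (MvPolynomial σ ℝ)⟦X⟧) ∈ polyaFrequencySeries σ := by
  simpa using isPolyaFrequency_C_add_C_mul_X (σ := σ) (nonnegPolys σ).one_mem
    (nonnegPolys σ).zero_mem

end PolyaFrequency

/-- **Theorem (linearly factoring weights, constant vertical weight: columns
are Pólya frequency sequences).**  Under the linear factorization hypothesis
on the weights, if `b n = γ` for all `n` with `γ` a nonnegative polynomial,
then for every `k` the Toeplitz matrix of the `k`-th column sequence
`n ↦ M n k` of the weighted lattice-path matrix `M` is totally positive. -/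
theorem toeplitz_col_latticeM_totallyPositive_of_linear_factorization
    {σ : Type*} (t ℓ : ℕ)
    (a : ℕ → ℕ → MvPolynomial σ ℝ) (b : ℕ → MvPolynomial σ ℝ)
    (γ : MvPolynomial σ ℝ) (hγ : PolyNonneg γ) (hbγ : ∀ n, b n = γ)
    (α β : Fin ℓ → MvPolynomial σ ℝ)
    (hα : ∀ j, PolyNonneg (α j)) (hβ : ∀ j, PolyNonneg (β j))
    (hfact : ∀ n i, i ≤ ℓ → a n i =
      ∑ S ∈ Finset.powersetCard i (Finset.univ : Finset (Fin ℓ)),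
        (∏ j ∈ S, α j) * ∏ j ∈ Sᶜ, β j)
    (k : ℕ) :
    TP (toeplitz fun n => latticeM t ℓ a b n k) := by
  set Q := ∏ j, (C (β j) + C (α j) * X)
  have hcol : (fun n => latticeM t ℓ a b n k) =
      (coeff · (geometricSeries γ * (X ^ t * Q * geometricSeries γ) ^ k)) := by
    refine funext fun n => latticeM_eq_coeff hbγ (fun n i hi => ?_) (fun i hi => ?_) n k
    · rw [hfact n i hi, coeff_prod_C_add_C_mul_X]
    · rw [coeff_prod_C_add_C_mul_X, Finset.powersetCard_eq_empty.2 (by simpa using hi),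
        Finset.sum_empty]
  have hG : geometricSeries γ ∈ polyaFrequencySeries σ := isPolyaFrequency_geometricSeries hγ
  have hQ : Q ∈ polyaFrequencySeries σ :=
    prod_mem fun j _ => isPolyaFrequency_C_add_C_mul_X (hα j) (hβ j)
  rw [hcol]
  exact mul_mem hG (pow_mem (mul_mem (mul_mem (pow_mem X_mem_polyaFrequencySeries t) hQ) hG) k)
end

section
/- Theorem (M is a Riordan array). For every k ∈ ℕ, the following identity of formal power series in PowerSeries R holds: (Σ_{n≥0} M n k · X^n) · (1 − γ·X)^(k+1) = (Σ_{i=0}^{ℓ} a_i · X^(t+i))^k. Equivalently, the k-th column generating function of M is (Σ_{i=0}^{ℓ} a_i z^(t+i))^k / (1 − γ z)^(k+1), i.e., M is the Riordan array R(1/(1−γz), (Σ_{i=0}^{ℓ} a_i z^(t+i))/(1−γz)). -/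
/-! Write `G_k` for the `k`-th column generating function of `M` and `A = Σ_i a_i X^(t+i)`.
Multiplying by `1 - γX` cancels the vertical steps, so the recurrence of `M` reads
`G_{k+1} (1 - γX) = A G_k`, while `G_0 (1 - γX) = 1`. Induction on `k` gives
`G_k (1 - γX)^(k+1) = A^k`. -/

open Finset

open PowerSeries

section Recurrence

variable {R : Type*} [CommRing R] {t ℓ : ℕ} {a : ℕ → ℕ → R} {b : ℕ → R}

theorem latticeM_zero_zero : latticeM t ℓ a b 0 0 = 1 := by
  simp [latticeM]

theorem latticeM_succ_zero (n : ℕ) :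
    latticeM t ℓ a b (n + 1) 0 = b (n + 1) * latticeM t ℓ a b n 0 := by
  rw [latticeM, latticeM, prod_Icc_succ_top (by omega), mul_comm]

-- The recurrence at height `0`, written like `latticeM_succ_succ` (`0 - t - i` truncates).
theorem latticeM_zero_succ (k : ℕ) :
    latticeM t ℓ a b 0 (k + 1) =
      ∑ i ∈ range (ℓ + 1), if t + i ≤ 0 then a 0 i * latticeM t ℓ a b (0 - t - i) k else 0 := by
  rw [latticeM]
  cases t <;> simp

theorem latticeM_succ_of_lt {n : ℕ} (k : ℕ) (h : n < t) : latticeM t ℓ a b n (k + 1) = 0 := by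
  cases n with
  | zero => rw [latticeM, if_neg (by omega)]
  | succ n => rw [latticeM, if_pos h]

theorem latticeM_succ_succ (n k : ℕ) :
    latticeM t ℓ a b (n + 1) (k + 1) =
      (∑ i ∈ range (ℓ + 1),
          if t + i ≤ n + 1 then a (n + 1) i * latticeM t ℓ a b (n + 1 - t - i) k else 0)
        + b (n + 1) * latticeM t ℓ a b n (k + 1) := by
  by_cases h : n + 1 < t
  · rw [latticeM_succ_of_lt k h, latticeM_succ_of_lt k (by omega : n < t), mul_zero, add_zero,
      eq_comm]
    exact sum_eq_zero fun i _ => if_neg (by omega)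
  · rw [latticeM, if_neg h]

end Recurrence

section Coefficients

variable {R : Type*} [CommRing R]

theorem coeff_zero_mul_one_sub_C_mul_X (f : R⟦X⟧) (γ : R) :
    coeff 0 (f * (1 - C γ * X)) = coeff 0 f := by
  simp

theorem coeff_succ_mul_one_sub_C_mul_X (f : R⟦X⟧) (γ : R) (n : ℕ) :
    coeff (n + 1) (f * (1 - C γ * X)) = coeff (n + 1) f - γ * coeff n f := by
  rw [show f * (1 - C γ * X) = f - C γ * (f * X) by ring, map_sub, coeff_C_mul, coeff_succ_mul_X]

theorem coeff_sum_C_mul_X_pow_mul (s : Finset ℕ) (a : ℕ → R) (t : ℕ) (f : R⟦X⟧) (n : ℕ) :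
    coeff n ((∑ i ∈ s, C (a i) * X ^ (t + i)) * f) =
      ∑ i ∈ s, if t + i ≤ n then a i * coeff (n - t - i) f else 0 := by
  rw [sum_mul, map_sum]
  refine sum_congr rfl fun i _ => ?_
  rw [mul_assoc, coeff_C_mul, coeff_X_pow_mul', Nat.sub_sub]
  split_ifs <;> simp

end Coefficients

section Column

variable {R : Type*} [CommRing R] (t ℓ : ℕ) (a : ℕ → R) (γ : R)

def latticeColumn (k : ℕ) : R⟦X⟧ :=
  mk fun n => latticeM t ℓ (fun _ i => a i) (fun _ => γ) n k

theorem latticeColumn_zero_mul : latticeColumn t ℓ a γ 0 * (1 - C γ * X) = 1 := by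
  ext (_ | n)
  · simp [coeff_zero_mul_one_sub_C_mul_X, latticeColumn, latticeM_zero_zero]
  · simp [coeff_succ_mul_one_sub_C_mul_X, latticeColumn, latticeM_succ_zero, coeff_one]

theorem latticeColumn_succ_mul (k : ℕ) :
    latticeColumn t ℓ a γ (k + 1) * (1 - C γ * X) =
      (∑ i ∈ range (ℓ + 1), C (a i) * X ^ (t + i)) * latticeColumn t ℓ a γ k := by
  ext (_ | n) <;>
    simp only [coeff_zero_mul_one_sub_C_mul_X, coeff_succ_mul_one_sub_C_mul_X,
      coeff_sum_C_mul_X_pow_mul, latticeColumn, coeff_mk]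
  · exact latticeM_zero_succ k
  · rw [latticeM_succ_succ, add_sub_cancel_right]

end Column

/-- **Theorem (`M` is a Riordan array).**  When the step weights `a i` are
independent of the height and the vertical weight is the constant `γ`, the
`k`-th column generating function of `M` satisfies
`(Σ_n M n k · X^n) · (1 - γX)^(k+1) = (Σ_{i=0}^ℓ a i · X^(t+i))^k`,
i.e. `M` is the Riordan array
`R(1/(1-γz), (Σ_i a i z^{t+i})/(1-γz))`. -/
theorem latticeM_riordan {R : Type*} [CommRing R] (t ℓ : ℕ) (a : ℕ → R) (γ : R)
    (k : ℕ) :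
    (PowerSeries.mk fun n => latticeM t ℓ (fun _ i => a i) (fun _ => γ) n k) *
        (1 - PowerSeries.C γ * PowerSeries.X) ^ (k + 1) =
      (∑ i ∈ Finset.range (ℓ + 1), PowerSeries.C (a i) * PowerSeries.X ^ (t + i)) ^ k := by
  change latticeColumn t ℓ a γ k * _ = _
  induction k with
  | zero => simpa using latticeColumn_zero_mul t ℓ a γ
  | succ k ih =>
    rw [pow_succ', ← mul_assoc, latticeColumn_succ_mul, mul_assoc, ih, pow_succ']
end
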